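/- Let n ≥ 1, λ ≥ 1, d_σ > 0, σ_0 > 0. Let (ξ_t)_{t∈ℕ} be i.i.d. ℝⁿ-valued random vectors, each distributed as the vector (N_{1:λ}, N_2, …, N_n) with independent coordinates, first coordinate distributed as the minimum of λ i.i.d. standard normals and the other n−1 coordinates standard normal. Define σ_{t+1} = σ_t · exp((1/(2 d_σ)) (‖ξ_t‖²/n − 1)) (the CSA-ES step-size recursion without cumulation, c = 1). Then almost surely (1/t) ln(σ_t/σ_0) converges, as t → ∞, to Δ_σ := (1/(2 d_σ n)) (E(N_{1:λ}²) − 1). -/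

import Mathlib

open MeasureTheory ProbabilityTheory Filter Real

/-- Law of the minimum (first order statistic) of `lam` i.i.d. standard normal
random variables. -/
noncomputable def minLaw (lam : ℕ) : Measure ℝ :=
  (Measure.pi fun _ : Fin lam => gaussianReal 0 1).map fun x => ⨅ i, x i

instance (lam : ℕ) : IsProbabilityMeasure (minLaw lam) := by
  unfold minLaw
  exact Measure.isProbabilityMeasure_map
    ((Measurable.iInf fun i => measurable_pi_apply i).aemeasurable)

/-- Law of the selected step `(N_{1:λ}, N_2, …, N_n)`: independent coordinates, the
first coordinate distributed as the minimum of `lam` i.i.d. standard normals and the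
other `n - 1` coordinates standard normal. -/
noncomputable def xiLaw (n lam : ℕ) : Measure (Fin n → ℝ) :=
  Measure.pi fun i => if (i : ℕ) = 0 then minLaw lam else gaussianReal 0 1

/-!
Unrolling the recursion, `ln (σ_t / σ_0)` is the partial sum of the i.i.d. increments
`(‖ξ_s‖² / n - 1) / (2 d_σ)`, so the strong law of large numbers gives the limit
`(E ‖ξ‖² / n - 1) / (2 d_σ)`. Since the last `n - 1` coordinates of `ξ` are standard normal,
`E ‖ξ‖² = E (N_{1:λ}²) + n - 1`, and this is finite because `N_{1:λ}²` is bounded by the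
sum of the squares of the `λ` normals it is the minimum of.
-/

open Finset
open scoped NNReal

lemma integrable_sq_gaussianReal (μ : ℝ) (v : ℝ≥0) :
    Integrable (fun x : ℝ => x ^ 2) (gaussianReal μ v) :=
  (memLp_id_gaussianReal 2).integrable_sq

lemma integral_sq_gaussianReal_zero (v : ℝ≥0) :
    ∫ x, x ^ 2 ∂gaussianReal 0 v = v := by
  rw [← variance_of_integral_eq_zero aemeasurable_id' integral_id_gaussianReal,
    variance_fun_id_gaussianReal]

lemma sq_iInf_le_sum_sq {ι : Type*} [Fintype ι] (x : ι → ℝ) :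
    (⨅ i, x i) ^ 2 ≤ ∑ i, x i ^ 2 := by
  cases isEmpty_or_nonempty ι
  · simp
  obtain ⟨j, hj⟩ := Finite.exists_min x
  have hmin : ⨅ i, x i = x j :=
    le_antisymm (ciInf_le (Finite.bddBelow_range x) j) (le_ciInf hj)
  rw [hmin]
  exact single_le_sum (fun i _ => sq_nonneg (x i)) (mem_univ j)

lemma integrable_sq_minLaw (lam : ℕ) : Integrable (fun x : ℝ => x ^ 2) (minLaw lam) := by
  have hmin : Measurable fun x : Fin lam → ℝ => ⨅ i, x i := .iInf fun i => measurable_pi_apply i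
  rw [minLaw, integrable_map_measure (by fun_prop) hmin.aemeasurable]
  have hsum : Integrable (fun x : Fin lam → ℝ => ∑ i, x i ^ 2)
      (Measure.pi fun _ => gaussianReal 0 1) :=
    integrable_finsetSum _ fun i _ =>
      integrable_comp_eval (f := (· ^ 2)) (integrable_sq_gaussianReal 0 1)
  refine hsum.mono (hmin.pow_const 2).aestronglyMeasurable (.of_forall fun x => ?_)
  rw [Function.comp_apply, norm_of_nonneg (sq_nonneg _),
    norm_of_nonneg (sum_nonneg fun i _ => sq_nonneg (x i))]
  exact sq_iInf_le_sum_sq x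

instance isProbabilityMeasure_ite {α : Type*} [MeasurableSpace α] {p : Prop} [Decidable p]
    (μ ν : Measure α) [IsProbabilityMeasure μ] [IsProbabilityMeasure ν] :
    IsProbabilityMeasure (if p then μ else ν) := by
  split <;> infer_instance

instance (n lam : ℕ) : IsProbabilityMeasure (xiLaw n lam) := by
  unfold xiLaw; infer_instance

lemma integrable_sq_xiLaw_apply (n lam : ℕ) (i : Fin n) :
    Integrable (fun x : Fin n → ℝ => x i ^ 2) (xiLaw n lam) := by
  refine integrable_comp_eval (f := (· ^ 2)) ?_
  split
  · exact integrable_sq_minLaw lam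
  · exact integrable_sq_gaussianReal 0 1

lemma integrable_sum_sq_xiLaw (n lam : ℕ) :
    Integrable (fun x : Fin n → ℝ => ∑ i, x i ^ 2) (xiLaw n lam) :=
  integrable_finsetSum _ fun i _ => integrable_sq_xiLaw_apply n lam i

lemma integral_sum_sq_xiLaw (n lam : ℕ) :
    ∫ x, ∑ i, x i ^ 2 ∂xiLaw (n + 1) lam = (∫ y, y ^ 2 ∂minLaw lam) + n := by
  have hcoord (i : Fin (n + 1)) : ∫ x, x i ^ 2 ∂xiLaw (n + 1) lam =
      ∫ y, y ^ 2 ∂(if (i : ℕ) = 0 then minLaw lam else gaussianReal 0 1) :=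
    integral_comp_eval (f := (· ^ 2)) (by fun_prop)
  rw [integral_finsetSum _ fun i _ => (integrable_sq_xiLaw_apply _ lam i), Fin.sum_univ_succ]
  simp [hcoord, integral_sq_gaussianReal_zero]

lemma hasLaw_of_map_eq {Ω E : Type*} [MeasurableSpace Ω] [MeasurableSpace E] {P : Measure Ω}
    {ν : Measure E} [NeZero ν] {X : Ω → E} (h : P.map X = ν) : HasLaw X ν P :=
  ⟨.of_map_ne_zero (h ▸ NeZero.ne ν), h⟩

theorem ae_tendsto_avg_comp_of_iIndepFun {Ω E : Type*} [MeasurableSpace Ω] [MeasurableSpace E]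
    {P : Measure Ω} {ν : Measure E} {ξ : ℕ → Ω → E} (hindep : iIndepFun ξ P)
    (hlaw : ∀ t, HasLaw (ξ t) ν P) {f : E → ℝ} (hf : Measurable f) (hint : Integrable f ν) :
    ∀ᵐ ω ∂P, Tendsto (fun t : ℕ => (∑ i ∈ range t, f (ξ i ω)) / t) atTop (nhds (∫ x, f x ∂ν)) := by
  have hident : ∀ t, IdentDistrib (f ∘ ξ t) (f ∘ ξ 0) P P := fun t =>
    (IdentDistrib.mk (hlaw t).aemeasurable (hlaw 0).aemeasurable
      (by rw [(hlaw t).map_eq, (hlaw 0).map_eq])).comp hf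
  have hslln := strong_law_ae_real (fun t => f ∘ ξ t)
    (((hlaw 0).map_eq ▸ hint).comp_aemeasurable (hlaw 0).aemeasurable)
    (fun i j hij => (hindep.indepFun hij).comp hf hf) hident
  rwa [(hlaw 0).integral_comp hint.aestronglyMeasurable] at hslln

lemma log_div_eq_sum_of_mul_exp {σ a : ℕ → ℝ} {σ0 : ℝ} (hσ0 : σ0 ≠ 0) (h0 : σ 0 = σ0)
    (hrec : ∀ t, σ (t + 1) = σ t * exp (a t)) (t : ℕ) :
    log (σ t / σ0) = ∑ i ∈ range t, a i := by
  have hσ : σ t = σ0 * exp (∑ i ∈ range t, a i) := by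
    induction t with
    | zero => simp [h0]
    | succ t ih => rw [hrec, ih, sum_range_succ, exp_add, mul_assoc]
  rw [hσ, mul_div_cancel_left₀ _ hσ0, log_exp]

theorem stmt_5_general {n lam : ℕ} (hn : 1 ≤ n)
    {Ω : Type*} [MeasureSpace Ω]
    (d σ0 : ℝ) (hσ0 : 0 < σ0)
    (ξ : ℕ → Ω → (Fin n → ℝ))
    (hξindep : iIndepFun ξ ℙ)
    (hξlaw : ∀ t, Measure.map (ξ t) ℙ = xiLaw n lam)
    (σ : ℕ → Ω → ℝ) (h0 : ∀ ω, σ 0 ω = σ0)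
    (hrec : ∀ t ω, σ (t + 1) ω =
      σ t ω * Real.exp ((1 / (2 * d)) * ((∑ i, (ξ t ω i) ^ 2) / n - 1))) :
    ∀ᵐ ω ∂ℙ, Tendsto (fun t : ℕ => Real.log (σ t ω / σ0) / t) atTop
      (nhds ((1 / (2 * d * n)) * ((∫ x, x ^ 2 ∂(minLaw lam)) - 1))) := by
  obtain ⟨m, rfl⟩ : ∃ m, n = m + 1 := ⟨n - 1, by omega⟩
  set f : (Fin (m + 1) → ℝ) → ℝ := fun x => (1 / (2 * d)) * ((∑ i, x i ^ 2) / ↑(m + 1) - 1)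
  have hint : Integrable f (xiLaw (m + 1) lam) :=
    (((integrable_sum_sq_xiLaw _ lam).div_const _).sub (integrable_const 1)).const_mul _
  have hmean : ∫ x, f x ∂xiLaw (m + 1) lam =
      (1 / (2 * d * ↑(m + 1))) * ((∫ x, x ^ 2 ∂(minLaw lam)) - 1) := by
    rw [integral_const_mul, integral_sub ((integrable_sum_sq_xiLaw _ lam).div_const _)
      (integrable_const 1), integral_div, integral_sum_sq_xiLaw]
    simp only [integral_const, probReal_univ, smul_eq_mul, one_mul]
    field_simp
    push_cast
    ring
  have hslln := ae_tendsto_avg_comp_of_iIndepFun hξindep (fun t => hasLaw_of_map_eq (hξlaw t))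
    (by fun_prop) hint
  filter_upwards [hslln] with ω hω
  have hlog (t : ℕ) : log (σ t ω / σ0) = ∑ i ∈ range t, f (ξ i ω) :=
    log_div_eq_sum_of_mul_exp (σ := (σ · ω)) hσ0.ne' (h0 ω) (fun t => hrec t ω) t
  simpa only [hlog, hmean] using hω

/-- For the `(1,λ)`-CSA-ES without cumulation (`c = 1`) on linear
functions, `(1/t) ln(σ_t/σ₀)` converges almost surely to
`Δ_σ = (1/(2 d_σ n)) (E(N_{1:λ}²) − 1)`. -/
theorem stmt_5 {n lam : ℕ} (hn : 1 ≤ n) (hlam : 1 ≤ lam)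
    {Ω : Type*} [MeasureSpace Ω] [IsProbabilityMeasure (ℙ : Measure Ω)]
    (d σ0 : ℝ) (hd : 0 < d) (hσ0 : 0 < σ0)
    (ξ : ℕ → Ω → (Fin n → ℝ)) (hξmeas : ∀ t, Measurable (ξ t))
    (hξindep : iIndepFun ξ ℙ)
    (hξlaw : ∀ t, Measure.map (ξ t) ℙ = xiLaw n lam)
    (σ : ℕ → Ω → ℝ) (h0 : ∀ ω, σ 0 ω = σ0)
    (hrec : ∀ t ω, σ (t + 1) ω =
      σ t ω * Real.exp ((1 / (2 * d)) * ((∑ i, (ξ t ω i) ^ 2) / n - 1))) :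
    ∀ᵐ ω ∂ℙ, Tendsto (fun t : ℕ => Real.log (σ t ω / σ0) / t) atTop
      (nhds ((1 / (2 * d * n)) * ((∫ x, x ^ 2 ∂(minLaw lam)) - 1))) :=
  stmt_5_general hn d σ0 hσ0 ξ hξindep hξlaw σ h0 hrec
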